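/- Let (A_n) be a stationary sequence of topical operators with memory loss property (some finite product has rank 1 with positive probability) and ergodic. Define R = min{n : rk(A_{n-1}⋯A_1)=1}. Then R is almost surely finite, and for every t ≥ R, max_i(A_{t-1}⋯A_0 0)_i − max_i(A_{t-1}⋯A_1 0)_i = max_i(A_{R-1}⋯A_0 0)_i − max_i(A_{R-1}⋯A_1 0)_i; i.e., the sequence (x_{0t}−x_{1t})_{t} is constant from time R on. -/

import Mathlib

open MeasureTheory

/-- A map on `ℝ^d` is *topical* if it is isotone and additively homogeneous. -/
def Topical (d : ℕ) (A : (Fin d → ℝ) → (Fin d → ℝ)) : Prop :=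
  (∀ x y : Fin d → ℝ, x ≤ y → A x ≤ A y) ∧
  (∀ (x : Fin d → ℝ) (a : ℝ), A (x + fun _ => a) = A x + fun _ => a)

/-- `compOp A s n = A_{s+n-1} ∘ ⋯ ∘ A_s`. -/
def compOp {d : ℕ} (A : ℕ → (Fin d → ℝ) → (Fin d → ℝ)) (s : ℕ) :
    ℕ → (Fin d → ℝ) → (Fin d → ℝ)
  | 0 => id
  | n + 1 => A (s + n) ∘ compOp A s n

/-- `θ` has rank 1: the induced map on `ℝ^d / ℝ·1` is constant. -/
def Rank1 (d : ℕ) (θ : (Fin d → ℝ) → (Fin d → ℝ)) : Prop :=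
  ∀ x y : Fin d → ℝ, ∃ a : ℝ, θ x = θ y + fun _ => a

/-- `x_{st}(ω) = max_i (A_{t-1}⋯A_s 0)_i` with `A_m(ω) = op (ω m)`. -/
noncomputable def xst {E : Type*} (d : ℕ) [NeZero d]
    (op : E → (Fin d → ℝ) → (Fin d → ℝ)) (s t : ℕ) (ω : ℕ → E) : ℝ :=
  ⨆ i, compOp (fun m => op (ω m)) s (t - s) 0 i

/-- The memory loss time `R(ω) = min {n | rk(A_{n-1}⋯A_1) = 1}`. -/
noncomputable def mlTime {E : Type*} (d : ℕ)
    (op : E → (Fin d → ℝ) → (Fin d → ℝ)) (ω : ℕ → E) : ℕ :=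
  sInf {n : ℕ | 1 ≤ n ∧ Rank1 d (compOp (fun m => op (ω m)) 1 (n - 1))}

/-! ### Auxiliary lemmas -/

/-- Splitting a composition: `compOp A s (m+n) = compOp A (s+m) n ∘ compOp A s m`. -/
lemma compOp_add {d : ℕ} (A : ℕ → (Fin d → ℝ) → (Fin d → ℝ)) (s m : ℕ) :
    ∀ n, compOp A s (m + n) = compOp A (s + m) n ∘ compOp A s m := by
  intro n
  induction n with
  | zero => simp [compOp]
  | succ n ih =>
    show compOp A s (m + n + 1) = _
    rw [compOp, ih]
    show A (s + (m + n)) ∘ _ = _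
    rw [compOp]
    ext x i
    simp [Function.comp, Nat.add_assoc]

/-- A shifted sequence composes like the original, shifted. -/
lemma compOp_shift {d : ℕ} (A : ℕ → (Fin d → ℝ) → (Fin d → ℝ)) (k s : ℕ) :
    ∀ n, compOp (fun m => A (m + k)) s n = compOp A (s + k) n := by
  intro n
  induction n with
  | zero => rfl
  | succ n ih =>
    rw [compOp, compOp, ih]
    have h : s + n + k = s + k + n := by omega
    rw [h]

/-- Compositions of topical operators are additively homogeneous. -/
lemma compOp_homog {d : ℕ} {A : ℕ → (Fin d → ℝ) → (Fin d → ℝ)}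
    (hA : ∀ m, Topical d (A m)) (s : ℕ) :
    ∀ n (x : Fin d → ℝ) (a : ℝ),
      compOp A s n (x + fun _ => a) = compOp A s n x + fun _ => a := by
  intro n
  induction n with
  | zero => intro x a; rfl
  | succ n ih =>
    intro x a
    show A (s + n) (compOp A s n (x + fun _ => a)) = _
    rw [ih, (hA (s + n)).2]
    rfl

/-- Pre-composing a rank-one map preserves rank one. -/
lemma Rank1.comp_right {d : ℕ} {θ : (Fin d → ℝ) → (Fin d → ℝ)} (hθ : Rank1 d θ)
    (g : (Fin d → ℝ) → (Fin d → ℝ)) : Rank1 d (θ ∘ g) := fun x y => hθ (g x) (g y)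

/-- Post-composing a rank-one map with an additively homogeneous map preserves
rank one. -/
lemma Rank1.comp_left {d : ℕ} {θ f : (Fin d → ℝ) → (Fin d → ℝ)} (hθ : Rank1 d θ)
    (hf : ∀ (x : Fin d → ℝ) (a : ℝ), f (x + fun _ => a) = f x + fun _ => a) :
    Rank1 d (f ∘ θ) := by
  intro x y
  obtain ⟨a, ha⟩ := hθ x y
  exact ⟨a, by simp [Function.comp, ha, hf]⟩

lemma iterate_shift_apply {E : Type*} (ω : ℕ → E) (k : ℕ) :
    (fun ω (n : ℕ) => ω (n + 1))^[k] ω = fun n => ω (n + k) := by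
  induction k with
  | zero => rfl
  | succ k ih =>
    rw [Function.iterate_succ_apply', ih]
    funext n
    show ω (n + 1 + k) = ω (n + (k + 1))
    congr 1
    omega

lemma iSup_add_const {ι : Type*} [Nonempty ι] [Finite ι] (f : ι → ℝ) (a : ℝ) :
    (⨆ i, (f i + a)) = (⨆ i, f i) + a := by
  have hb : BddAbove (Set.range f) := (Set.finite_range f).bddAbove
  have hb' : BddAbove (Set.range fun i => f i + a) :=
    (Set.finite_range _).bddAbove
  apply le_antisymm
  · exact ciSup_le fun i => add_le_add_left (le_ciSup hb i) a
  · have : (⨆ i, f i) ≤ (⨆ i, (f i + a)) - a := by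
      refine ciSup_le fun i => ?_
      have := le_ciSup hb' i
      linarith
    linarith

/-- For a stationary ergodic sequence of topical operators with the memory loss
property, `R = min {n | rk(A_{n-1}⋯A_1) = 1}` is a.s. finite and, for every
`t ≥ R`, `x_{0t} - x_{1t} = x_{0R} - x_{1R}`: the sequence `(x_{0t} - x_{1t})_t`
is constant from time `R` on. -/
theorem memory_loss_time_finite_and_stabilizes {E : Type*} [MeasurableSpace E]
    {d : ℕ} [NeZero d]
    (μ : Measure (ℕ → E)) [IsProbabilityMeasure μ]
    (hshift : Ergodic (fun ω (n : ℕ) => ω (n + 1)) μ)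
    (op : E → (Fin d → ℝ) → (Fin d → ℝ)) (hop : ∀ e, Topical d (op e))
    (hmeas : ∀ s n : ℕ,
      MeasurableSet {ω : ℕ → E | Rank1 d (compOp (fun m => op (ω m)) s n)})
    (hMLP : ∃ N : ℕ, 1 ≤ N ∧
      0 < μ {ω | Rank1 d (compOp (fun m => op (ω m)) 1 (N - 1))}) :
    ∀ᵐ ω ∂μ,
      (∃ n : ℕ, 1 ≤ n ∧ Rank1 d (compOp (fun m => op (ω m)) 1 (n - 1))) ∧
      ∀ t : ℕ, mlTime d op ω ≤ t →
        xst d op 0 t ω - xst d op 1 t ω =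
          xst d op 0 (mlTime d op ω) ω - xst d op 1 (mlTime d op ω) ω := by
  haveI : Nonempty (Fin d) := ⟨⟨0, Nat.pos_of_ne_zero (NeZero.ne d)⟩⟩
  obtain ⟨N, hN1, hNpos⟩ := hMLP
  set T : (ℕ → E) → (ℕ → E) := fun ω (n : ℕ) => ω (n + 1) with hT
  set S : Set (ℕ → E) := {ω | Rank1 d (compOp (fun m => op (ω m)) 1 (N - 1))} with hS
  have hSmeas : MeasurableSet S := hmeas 1 (N - 1)
  -- the union of all preimages of S under iterates of the shift
  set U : Set (ℕ → E) := ⋃ k : ℕ, (T^[k]) ⁻¹' S with hU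
  have hTmeas : Measurable T := hshift.toMeasurePreserving.measurable
  have hUmeas : MeasurableSet U :=
    MeasurableSet.iUnion fun k => (hTmeas.iterate k) hSmeas
  have hpre : T ⁻¹' U ⊆ U := by
    intro ω hω
    simp only [hU, Set.mem_preimage, Set.mem_iUnion] at hω ⊢
    obtain ⟨k, hk⟩ := hω
    exact ⟨k + 1, by rwa [Function.iterate_succ_apply]⟩
  have hUfull : U =ᵐ[μ] (Set.univ : Set (ℕ → E)) := by
    rcases hshift.ae_empty_or_univ_of_preimage_ae_le' hUmeas.nullMeasurableSet
        (HasSubset.Subset.eventuallyLE hpre) (measure_ne_top μ U) with h | h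
    · exfalso
      have hSU : S ⊆ U := by
        intro ω hω
        exact Set.mem_iUnion.2 ⟨0, hω⟩
      have : μ S ≤ μ U := measure_mono hSU
      rw [h.measure_eq, measure_empty] at this
      exact absurd (le_antisymm this bot_le) (ne_of_gt hNpos)
    · exact h
  have hae : ∀ᵐ ω ∂μ, ω ∈ U := by
    filter_upwards [hUfull.mem_iff.mono fun ω h => h] with ω h
    simpa using h.2 trivial
  filter_upwards [hae] with ω hω
  set A : ℕ → (Fin d → ℝ) → (Fin d → ℝ) := fun m => op (ω m) with hA
  have hAtop : ∀ m, Topical d (A m) := fun m => hop (ω m)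
  -- a.s. finiteness
  have hfin : ∃ n : ℕ, 1 ≤ n ∧ Rank1 d (compOp A 1 (n - 1)) := by
    obtain ⟨k, hk⟩ := Set.mem_iUnion.1 hω
    have hk' : Rank1 d (compOp (fun m => op ((T^[k] ω) m)) 1 (N - 1)) := hk
    rw [iterate_shift_apply] at hk'
    have hshifted : Rank1 d (compOp A (1 + k) (N - 1)) := by
      rwa [compOp_shift A k 1 (N - 1)] at hk'
    refine ⟨k + N, by omega, ?_⟩
    have hsplit : k + N - 1 = k + (N - 1) := by omega
    rw [hsplit, compOp_add A 1 k (N - 1)]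
    exact hshifted.comp_right _
  refine ⟨hfin, ?_⟩
  -- the minimum is attained
  have hmem : mlTime d op ω ∈
      {n : ℕ | 1 ≤ n ∧ Rank1 d (compOp (fun m => op (ω m)) 1 (n - 1))} :=
    Nat.sInf_mem hfin
  set R : ℕ := mlTime d op ω with hR
  obtain ⟨hR1, hθ⟩ := hmem
  set θ : (Fin d → ℝ) → (Fin d → ℝ) := compOp A 1 (R - 1) with hθdef
  obtain ⟨a, ha⟩ := hθ (A 0 0) 0
  -- key computation: for t ≥ R, x_{0t} - x_{1t} = a
  have key : ∀ t : ℕ, R ≤ t → xst d op 0 t ω - xst d op 1 t ω = a := by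
    intro t ht
    have e1 : compOp A 0 R 0 = θ (A 0 0) := by
      have hRs : R = 1 + (R - 1) := by omega
      conv_lhs => rw [hRs]
      rw [compOp_add A 0 1 (R - 1)]
      rfl
    have e0 : compOp A 0 t = compOp A R (t - R) ∘ compOp A 0 R := by
      conv_lhs => rw [show t = R + (t - R) by omega]
      rw [compOp_add A 0 R (t - R), Nat.zero_add]
    have e2 : compOp A 1 (t - 1) = compOp A R (t - R) ∘ θ := by
      conv_lhs => rw [show t - 1 = (R - 1) + (t - R) by omega]
      rw [compOp_add A 1 (R - 1) (t - R), show 1 + (R - 1) = R by omega]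
    have h0 : compOp A 0 t 0 = compOp A R (t - R) (θ 0) + fun _ => a := by
      rw [e0]
      show compOp A R (t - R) (compOp A 0 R 0) = _
      rw [e1, ha, compOp_homog hAtop R (t - R) (θ 0) a]
    have h1 : compOp A 1 (t - 1) 0 = compOp A R (t - R) (θ 0) := by
      rw [e2]; rfl
    show (⨆ i, compOp A 0 (t - 0) 0 i) - (⨆ i, compOp A 1 (t - 1) 0 i) = a
    rw [Nat.sub_zero, h0, h1]
    set v : Fin d → ℝ := compOp A R (t - R) (θ 0) with hv
    have hsum : (⨆ i, (v i + a)) = (⨆ i, v i) + a := iSup_add_const v a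
    simp only [Pi.add_apply]
    rw [hsum]
    ring
  intro t ht
  rw [key t ht, key R le_rfl]
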